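/- For all natural numbers n and s with 2s ≤ n, the group of ℝ-algebra automorphisms of the product algebra ℝ^(n−2s) × ℂ^s is finite of order (n−2s)! · s! · 2^s. -/

import Mathlib

/-!
An ℝ-algebra map from `ℝ^ι × ℂ^κ` to a domain has prime kernel, and a prime ideal of a finite
product of rings comes from a single factor; so every coordinate of an automorphism is an
ℝ-algebra map out of one factor `ℝ` or `ℂ`. There is no ℝ-algebra map `ℂ → ℝ`, and surjectivity
rules out a complex coordinate factoring through `ℝ`. Hence an automorphism is given by a
permutation of the real factors, a permutation of the complex factors, and on each complex factor
the identity or complex conjugation; these data are free and determine the automorphism.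
-/

open Complex

section Factorization

variable {R A B K : Type*} [CommRing R] [CommRing A] [CommRing B] [CommRing K]
  [Algebra R A] [Algebra R B] [Algebra R K]

theorem AlgHom.exists_eq_comp_of_ker_le {π : A →ₐ[R] B} (hπ : Function.Surjective π)
    (f : A →ₐ[R] K) (h : RingHom.ker π ≤ RingHom.ker f) : ∃ g : B →ₐ[R] K, f = g.comp π :=
  ⟨(Ideal.Quotient.liftₐ _ f h).comp (Ideal.quotientKerAlgEquivOfSurjective hπ).symm.toAlgHom,
    by ext x; simp; rfl⟩

variable [IsDomain K]

theorem AlgHom.exists_eq_comp_fst_or_snd (f : A × B →ₐ[R] K) :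
    (∃ g : A →ₐ[R] K, f = g.comp (AlgHom.fst R A B)) ∨
      ∃ g : B →ₐ[R] K, f = g.comp (AlgHom.snd R A B) := by
  rcases (Ideal.ideal_prod_prime _).1 (RingHom.ker_isPrime f) with ⟨p, -, hp⟩ | ⟨p, -, hp⟩
  · refine .inl (exists_eq_comp_of_ker_le Prod.fst_surjective f fun x hx => ?_)
    rw [hp, Ideal.mem_prod]
    exact ⟨(show x.1 = 0 from hx) ▸ p.zero_mem, trivial⟩
  · refine .inr (exists_eq_comp_of_ker_le Prod.snd_surjective f fun x hx => ?_)
    rw [hp, Ideal.mem_prod]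
    exact ⟨trivial, (show x.2 = 0 from hx) ▸ p.zero_mem⟩

theorem AlgHom.exists_eq_comp_evalAlgHom {ι : Type*} [_root_.Finite ι] {A : ι → Type*}
    [∀ i, CommRing (A i)] [∀ i, Algebra R (A i)] (f : (Π i, A i) →ₐ[R] K) :
    ∃ i, ∃ g : A i →ₐ[R] K, f = g.comp (Pi.evalAlgHom R A i) := by
  obtain ⟨i, q, hq⟩ :=
    PrimeSpectrum.exists_comap_evalRingHom_eq ⟨RingHom.ker f, RingHom.ker_isPrime f⟩
  refine ⟨i, exists_eq_comp_of_ker_le (Function.surjective_eval i) f fun x hx => ?_⟩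
  have : x ∈ (PrimeSpectrum.comap (Pi.evalRingHom A i) q).asIdeal :=
    show x i ∈ q.asIdeal from (show x i = 0 from hx) ▸ q.asIdeal.zero_mem
  rwa [hq] at this

theorem AlgHom.exists_eq_apply_fst_or_apply_snd {ι κ : Type*} [_root_.Finite ι] [_root_.Finite κ]
    {A : ι → Type*} {B : κ → Type*} [∀ i, CommRing (A i)] [∀ j, CommRing (B j)]
    [∀ i, Algebra R (A i)] [∀ j, Algebra R (B j)] (f : (Π i, A i) × (Π j, B j) →ₐ[R] K) :
    (∃ i, ∃ g : A i →ₐ[R] K, ∀ p, f p = g (p.1 i)) ∨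
      ∃ j, ∃ g : B j →ₐ[R] K, ∀ p, f p = g (p.2 j) := by
  rcases exists_eq_comp_fst_or_snd f with ⟨g, rfl⟩ | ⟨g, rfl⟩
  · obtain ⟨i, g', rfl⟩ := exists_eq_comp_evalAlgHom g
    exact .inl ⟨i, g', fun _ => rfl⟩
  · obtain ⟨j, g', rfl⟩ := exists_eq_comp_evalAlgHom g
    exact .inr ⟨j, g', fun _ => rfl⟩

end Factorization

theorem Function.eq_of_forall_comp_eq {α β γ : Type*} [Nontrivial γ] {σ σ' : α → β}
    (h : ∀ g : β → γ, g ∘ σ = g ∘ σ') : σ = σ' := by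
  classical
  funext a
  by_contra hne
  obtain ⟨x, y, hxy⟩ := exists_pair_ne γ
  have := congrFun (h fun b => if b = σ a then x else y) a
  simp [Ne.symm hne] at this
  exact hxy this

theorem Complex.isEmpty_algHom_real : IsEmpty (ℂ →ₐ[ℝ] ℝ) := ⟨fun g => by
  have h : g I * g I = -1 := by rw [← map_mul, I_mul_I, map_neg, map_one]
  nlinarith [mul_self_nonneg (g I)]⟩

theorem Complex.nat_card_algEquiv_real : Nat.card (ℂ ≃ₐ[ℝ] ℂ) = 2 := by
  refine Nat.card_eq_two_iff.2 ⟨1, conjAe, fun h => ?_, Set.eq_univ_of_forall fun e => ?_⟩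
  · have := congrArg (· I) h
    norm_num [Complex.ext_iff] at this
  · rcases real_algHom_eq_id_or_conj e.toAlgHom with h | h
    · exact .inl (AlgEquiv.ext (AlgHom.ext_iff.1 h))
    · exact .inr (AlgEquiv.ext (AlgHom.ext_iff.1 h))

namespace ArchimedeanAlgebra

open Equiv

variable {ι κ : Type*}

noncomputable def autOfPermConj (d : Perm ι × Perm κ × (κ → ℂ ≃ₐ[ℝ] ℂ)) :
    ((ι → ℝ) × (κ → ℂ)) ≃ₐ[ℝ] ((ι → ℝ) × (κ → ℂ)) :=
  AlgEquiv.prodCongr (AlgEquiv.piCongrLeft' ℝ (fun _ => ℝ) d.1.symm)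
    ((AlgEquiv.piCongrLeft' ℝ (fun _ => ℂ) d.2.1.symm).trans (AlgEquiv.piCongrRight d.2.2))

theorem autOfPermConj_apply (d : Perm ι × Perm κ × (κ → ℂ ≃ₐ[ℝ] ℂ)) (p : (ι → ℝ) × (κ → ℂ)) :
    autOfPermConj d p = (p.1 ∘ d.1, fun j => d.2.2 j (p.2 (d.2.1 j))) :=
  rfl

theorem autOfPermConj_injective :
    Function.Injective (autOfPermConj : Perm ι × Perm κ × (κ → ℂ ≃ₐ[ℝ] ℂ) → _) := by
  rintro ⟨σ, τ, ε⟩ ⟨σ', τ', ε'⟩ h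
  have hp (p : (ι → ℝ) × (κ → ℂ)) := congrArg (· p) h
  simp only [autOfPermConj_apply, Prod.mk.injEq] at hp
  obtain rfl : ε = ε' := funext fun j => AlgEquiv.ext fun z => congrFun (hp (0, fun _ => z)).2 j
  obtain rfl : σ = σ' := Equiv.ext <| congrFun <|
    Function.eq_of_forall_comp_eq (γ := ℝ) fun q => (hp (q, 0)).1
  obtain rfl : τ = τ' := Equiv.ext <| congrFun <| Function.eq_of_forall_comp_eq (γ := ℂ)
    fun q => funext fun j => (ε j).injective (congrFun (hp (0, q)).2 j)
  rfl

variable [Finite ι] [Finite κ]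

theorem exists_algHom_real_eq_apply_fst (χ : (ι → ℝ) × (κ → ℂ) →ₐ[ℝ] ℝ) :
    ∃ i, ∀ p, χ p = p.1 i := by
  rcases AlgHom.exists_eq_apply_fst_or_apply_snd χ with ⟨i, g, hg⟩ | ⟨j, g, -⟩
  · exact ⟨i, fun p => by rw [hg, Subsingleton.elim g (AlgHom.id ℝ ℝ)]; rfl⟩
  · exact Complex.isEmpty_algHom_real.elim g

theorem exists_algHom_complex_eq_apply_snd (χ : (ι → ℝ) × (κ → ℂ) →ₐ[ℝ] ℂ)
    (hχ : Function.Surjective χ) : ∃ j, ∃ ε : ℂ ≃ₐ[ℝ] ℂ, ∀ p, χ p = ε (p.2 j) := by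
  rcases AlgHom.exists_eq_apply_fst_or_apply_snd χ with ⟨i, g, hg⟩ | ⟨j, g, hg⟩
  · obtain ⟨p, hp⟩ := hχ I
    have hreal : g (p.1 i) = (p.1 i : ℂ) := g.commutes (p.1 i)
    simpa [hreal] using congrArg Complex.im ((hg p).symm.trans hp)
  · exact ⟨j, AlgEquiv.ofBijective g g.bijective, hg⟩

theorem autOfPermConj_surjective :
    Function.Surjective (autOfPermConj : Perm ι × Perm κ × (κ → ℂ ≃ₐ[ℝ] ℂ) → _) := by
  intro φ
  have hfst (i : ι) := exists_algHom_real_eq_apply_fst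
    ((Pi.evalAlgHom ℝ _ i).comp ((AlgHom.fst ℝ _ _).comp φ.toAlgHom))
  have hsnd (j : κ) := exists_algHom_complex_eq_apply_snd
    ((Pi.evalAlgHom ℝ _ j).comp ((AlgHom.snd ℝ _ _).comp φ.toAlgHom))
    ((Function.surjective_eval j).comp (Prod.snd_surjective.comp φ.surjective))
  choose σ hσ using hfst
  choose τ ε hτ using hsnd
  have hσ_inj : Function.Injective σ := Function.surjective_comp_right_iff_injective.1 fun t => by
    obtain ⟨p, hp⟩ := φ.surjective (t, 0)
    exact ⟨p.1, funext fun i => by simpa [hp] using (hσ i p).symm⟩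
  have hτ_inj : Function.Injective τ := Function.surjective_comp_right_iff_injective.1 fun t => by
    obtain ⟨p, hp⟩ := φ.surjective (0, fun j => ε j (t j))
    exact ⟨p.2, funext fun j => (ε j).injective (by simpa [hp] using (hτ j p).symm)⟩
  refine ⟨(.ofBijective σ (Finite.injective_iff_bijective.1 hσ_inj),
    .ofBijective τ (Finite.injective_iff_bijective.1 hτ_inj), ε), AlgEquiv.ext fun p => ?_⟩
  exact Prod.ext (funext fun i => (hσ i p).symm) (funext fun j => (hτ j p).symm)

theorem nat_card_algEquiv :
    Nat.card (((ι → ℝ) × (κ → ℂ)) ≃ₐ[ℝ] ((ι → ℝ) × (κ → ℂ))) =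
      (Nat.card ι).factorial * (Nat.card κ).factorial * 2 ^ Nat.card κ := by
  rw [← Nat.card_congr (Equiv.ofBijective _ ⟨autOfPermConj_injective, autOfPermConj_surjective⟩),
    Nat.card_prod, Nat.card_prod, Nat.card_perm, Nat.card_perm, Nat.card_fun,
    Complex.nat_card_algEquiv_real, mul_assoc]

theorem finite_algEquiv : Finite (((ι → ℝ) × (κ → ℂ)) ≃ₐ[ℝ] ((ι → ℝ) × (κ → ℂ))) :=
  Nat.finite_of_card_ne_zero (by simp [nat_card_algEquiv, Nat.factorial_ne_zero])

end ArchimedeanAlgebra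

theorem aut_group_of_archimedean_algebra_general (n s : ℕ) :
    Finite (((Fin (n - 2 * s) → ℝ) × (Fin s → ℂ)) ≃ₐ[ℝ]
      ((Fin (n - 2 * s) → ℝ) × (Fin s → ℂ))) ∧
    Nat.card (((Fin (n - 2 * s) → ℝ) × (Fin s → ℂ)) ≃ₐ[ℝ]
      ((Fin (n - 2 * s) → ℝ) × (Fin s → ℂ))) =
      (n - 2 * s).factorial * s.factorial * 2 ^ s := by
  refine ⟨ArchimedeanAlgebra.finite_algEquiv, ?_⟩
  simp [ArchimedeanAlgebra.nat_card_algEquiv]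

/-- For all natural numbers `n` and `s` with `2s ≤ n`, the group of
ℝ-algebra automorphisms of the product algebra `ℝ^(n−2s) × ℂ^s` is finite of order
`(n−2s)! · s! · 2^s`. -/
theorem aut_group_of_archimedean_algebra (n s : ℕ) (h : 2 * s ≤ n) :
    Finite (((Fin (n - 2 * s) → ℝ) × (Fin s → ℂ)) ≃ₐ[ℝ]
      ((Fin (n - 2 * s) → ℝ) × (Fin s → ℂ))) ∧
    Nat.card (((Fin (n - 2 * s) → ℝ) × (Fin s → ℂ)) ≃ₐ[ℝ]
      ((Fin (n - 2 * s) → ℝ) × (Fin s → ℂ))) =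
      (n - 2 * s).factorial * s.factorial * 2 ^ s :=
  aut_group_of_archimedean_algebra_general n s
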